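/- arXiv:1805.07530 — 5 statements merged into one kernel-verified Lean document; each statement's English description precedes it below -/
import Mathlib

section
/- Let σ₀ = (1,3,2)(4,7,5) and σ₁ = (3,4)(5,6) be permutations of {1,...,7}. Then the subgroup of S₇ generated by σ₀ and σ₁ is isomorphic to GL₃(𝔽₂). -/
/-!
`GL₃(𝔽₂)` acts faithfully on the seven nonzero vectors of `𝔽₂³`. Labelling these by `Fin 7`
suitably, the cyclic coordinate shift `gen₀` acts as `σ₀` and the elementary transvection
`gen₁ = t₁₀` acts as `σ₁`, so it suffices that `gen₀` and `gen₁` generate `GL₃(𝔽₂)`.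
Since the only invertible diagonal matrix over `𝔽₂` is `1`, `GL₃(𝔽₂)` is generated by the
elementary transvections `tᵢⱼ = 1 + Eᵢⱼ`. Conjugation by `gen₀` shifts both indices, giving
`t₂₁` and `t₀₂` from `t₁₀`, and the commutator relation `[tᵢⱼ, tⱼₖ] = tᵢₖ` gives the other three.
-/

open Matrix

namespace Matrix.GeneralLinearGroup

variable {n R : Type*} [Fintype n] [DecidableEq n] [CommRing R]

instance faithfulSMul_nonzero [Nontrivial R] : FaithfulSMul (GL n R) {x : n → R // x ≠ 0} where
  eq_of_smul_eq_smul {A B} h := by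
    ext i j
    have hcol := congrArg Subtype.val (h ⟨Pi.single j 1, by simp⟩)
    simpa [Units.smul_def, mulVec_single_one] using congrFun hcol i

theorem closure_transvections_eq_top :
    Subgroup.closure
      {g : GL n (ZMod 2) | ∃ i j, i ≠ j ∧ (g : Matrix n n (ZMod 2)) = transvection i j 1} = ⊤ := by
  set H := Subgroup.closure
    {g : GL n (ZMod 2) | ∃ i j, i ≠ j ∧ (g : Matrix n n (ZMod 2)) = transvection i j 1}
  refine eq_top_iff.2 fun A _ => ?_
  obtain ⟨g, hg, hgA⟩ : ∃ g ∈ H, (g : Matrix n n (ZMod 2)) = A := by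
    refine diagonal_transvection_induction_of_det_ne_zero
      (fun M => ∃ g ∈ H, (g : Matrix n n (ZMod 2)) = M) A (det_ne_zero A)
      (fun D hD => ⟨1, H.one_mem, ?_⟩) (fun ⟨i, j, hij, c⟩ => ?_)
      (fun _ _ _ _ ⟨g, hg, hgM⟩ ⟨h, hh, hhN⟩ => ⟨g * h, H.mul_mem hg hh, by rw [coe_mul, hgM, hhN]⟩)
    · have hD : ∀ i, D i = 1 := fun i => Fin.eq_one_of_ne_zero (D i) <|
        Finset.prod_ne_zero_iff.1 (det_diagonal (d := D) ▸ hD) i (Finset.mem_univ i)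
      simp [funext hD]
    · obtain rfl | rfl := (eq_or_ne c 0).imp_right (Fin.eq_one_of_ne_zero c)
      · exact ⟨1, H.one_mem, by simp⟩
      · exact ⟨mkOfDetNeZero (transvection i j 1) (by simp [hij]),
          Subgroup.subset_closure ⟨i, j, hij, rfl⟩, rfl⟩
  exact Units.ext hgA ▸ hg

end Matrix.GeneralLinearGroup

theorem Equiv.permCongr_toPerm_eq_iff {G α β : Type*} [Group G] [MulAction G β] (ε : α ≃ β)
    (g : G) (σ : Equiv.Perm α) :
    ε.symm.permCongr (MulAction.toPerm g) = σ ↔ ∀ a, g • ε a = ε (σ a) := by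
  simp [Equiv.ext_iff, Equiv.permCongr_apply, Equiv.symm_apply_eq]

namespace GL3F2

local notation "𝔽₂" => ZMod 2

def fanoPoint : Fin 7 → Fin 3 → 𝔽₂ :=
  ![![0,0,1], ![0,1,0], ![1,0,0], ![1,1,0], ![1,0,1], ![1,1,1], ![0,1,1]]

noncomputable def fanoEquiv : Fin 7 ≃ {x : Fin 3 → 𝔽₂ // x ≠ 0} :=
  Equiv.ofBijective (fun i => ⟨fanoPoint i, by revert i; decide⟩) (by decide)

def gen₀ : GL (Fin 3) 𝔽₂ :=
  ⟨!![0,0,1; 1,0,0; 0,1,0], !![0,1,0; 0,0,1; 1,0,0], by decide, by decide⟩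

def gen₁ : GL (Fin 3) 𝔽₂ :=
  ⟨!![1,0,0; 1,1,0; 0,0,1], !![1,0,0; 1,1,0; 0,0,1], by decide, by decide⟩

theorem gen₀_mul_transvection_mul_inv : ∀ i j : Fin 3,
    (gen₀ : Matrix (Fin 3) (Fin 3) 𝔽₂) * transvection i j 1 *
        ((gen₀⁻¹ : GL (Fin 3) 𝔽₂) : Matrix (Fin 3) (Fin 3) 𝔽₂) =
      transvection (i + 1) (j + 1) (1 : 𝔽₂) := by
  decide

theorem transvection_commutator : ∀ i j k : Fin 3, i ≠ j → j ≠ k → i ≠ k →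
    transvection i j 1 * transvection j k 1 * transvection i j 1 * transvection j k 1 =
      (transvection i k 1 : Matrix (Fin 3) (Fin 3) 𝔽₂) := by
  decide

theorem exists_mem_closure_gens_coe_eq_transvection {i j : Fin 3} (hij : i ≠ j) :
    ∃ g ∈ Subgroup.closure {gen₀, gen₁}, (g : Matrix (Fin 3) (Fin 3) 𝔽₂) = transvection i j 1 := by
  set H := Subgroup.closure {gen₀, gen₁}
  have h₀ : gen₀ ∈ H := Subgroup.subset_closure (by simp)
  have conj {k l : Fin 3} : (∃ g ∈ H, (g : Matrix (Fin 3) (Fin 3) 𝔽₂) = transvection k l 1) →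
      ∃ g ∈ H, (g : Matrix (Fin 3) (Fin 3) 𝔽₂) = transvection (k + 1) (l + 1) 1
    | ⟨g, hg, hgt⟩ => ⟨gen₀ * g * gen₀⁻¹, H.mul_mem (H.mul_mem h₀ hg) (H.inv_mem h₀), by
        rw [GeneralLinearGroup.coe_mul, GeneralLinearGroup.coe_mul, hgt,
          gen₀_mul_transvection_mul_inv]⟩
  have descending (k : Fin 3) :
      ∃ g ∈ H, (g : Matrix (Fin 3) (Fin 3) 𝔽₂) = transvection (k + 1) k 1 := by
    have h₁₀ : ∃ g ∈ H, (g : Matrix (Fin 3) (Fin 3) 𝔽₂) = transvection 1 0 1 :=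
      ⟨gen₁, Subgroup.subset_closure (by simp), by decide⟩
    fin_cases k
    · exact h₁₀
    · exact conj h₁₀
    · exact conj (conj h₁₀)
  obtain rfl | rfl : i = j + 1 ∨ i = j + 1 + 1 := by revert i j; decide
  · exact descending j
  · obtain ⟨a, ha, hat⟩ := descending (j + 1)
    obtain ⟨b, hb, hbt⟩ := descending j
    refine ⟨a * b * a * b, H.mul_mem (H.mul_mem (H.mul_mem ha hb) ha) hb, ?_⟩
    simp only [GeneralLinearGroup.coe_mul, hat, hbt]
    exact transvection_commutator _ _ _ (by simp) (by simp) hij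

theorem closure_gens_eq_top : Subgroup.closure {gen₀, gen₁} = ⊤ := by
  refine eq_top_iff.2 (GeneralLinearGroup.closure_transvections_eq_top.symm.le.trans ?_)
  rw [Subgroup.closure_le]
  rintro g ⟨i, j, hij, hg⟩
  obtain ⟨h, hh, hgh⟩ := exists_mem_closure_gens_coe_eq_transvection hij
  exact Units.ext (hg.trans hgh.symm) ▸ hh

noncomputable def permRep : GL (Fin 3) 𝔽₂ →* Equiv.Perm (Fin 7) :=
  fanoEquiv.symm.permCongrHom.toMonoidHom.comp (MulAction.toPermHom _ _)

theorem permRep_injective : Function.Injective permRep :=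
  fanoEquiv.symm.permCongrHom.injective.comp MulAction.toPerm_injective

theorem permRep_gen₀ : permRep gen₀ = c[(0 : Fin 7), 2, 1] * c[(3 : Fin 7), 6, 4] :=
  (Equiv.permCongr_toPerm_eq_iff fanoEquiv gen₀ _).2 fun i => Subtype.ext (by revert i; decide)

theorem permRep_gen₁ : permRep gen₁ = c[(2 : Fin 7), 3] * c[(4 : Fin 7), 5] :=
  (Equiv.permCongr_toPerm_eq_iff fanoEquiv gen₁ _).2 fun i => Subtype.ext (by revert i; decide)

end GL3F2

open GL3F2 in
/-- The points `{1,…,7}` are identified with `Fin 7` via `i ↦ i - 1`. -/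
theorem monodromy_GL3F2 :
    Nonempty
      ((Subgroup.closure
          ({c[(0 : Fin 7), 2, 1] * c[(3 : Fin 7), 6, 4],
            c[(2 : Fin 7), 3] * c[(4 : Fin 7), 5]} : Set (Equiv.Perm (Fin 7)))) ≃*
        Matrix.GeneralLinearGroup (Fin 3) (ZMod 2)) := by
  have hrange : Subgroup.closure
      ({c[(0 : Fin 7), 2, 1] * c[(3 : Fin 7), 6, 4],
        c[(2 : Fin 7), 3] * c[(4 : Fin 7), 5]} : Set (Equiv.Perm (Fin 7))) = permRep.range := by
    rw [MonoidHom.range_eq_map, ← closure_gens_eq_top, MonoidHom.map_closure, Set.image_pair,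
      permRep_gen₀, permRep_gen₁]
  exact ⟨(MulEquiv.subgroupCongr hrange).trans (MonoidHom.ofInjective permRep_injective).symm⟩
end

section
/- Let n ≥ 5 and suppose π₀, π₁ ∈ Sₙ generate a subgroup containing Aₙ, and that the orders of π₀ and π₁ are distinct. Then the subgroup of Sₙ × Sₙ generated by (π₀, π₁) and (π₁, π₀) contains Aₙ × Aₙ. -/
/-!
Let `H` be the subgroup generated by `(π₀, π₁)` and `(π₁, π₀)`, and `K = {c | (1, c) ∈ H}`.
`H` is invariant under swapping the factors and projects onto `⟨π₀, π₁⟩ ⊇ Aₙ`, so `K` is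
normalized by `Aₙ`. Since the orders differ, some `k` kills exactly one of `π₀, π₁`, and then
`(π₀, π₁)ᵏ` or `(π₁, π₀)ᵏ` is a nontrivial element of `1 × K`. By simplicity of `Aₙ`, `K ∩ Aₙ` is
trivial or all of `Aₙ`. In the first case `K` centralizes `Aₙ`; the centralizer of `Aₙ` is then a
nontrivial normal subgroup of `Sₙ`, hence contains `Aₙ`, which is absurd as `Aₙ` is not abelian.
So `Aₙ ≤ K`, and by the swap symmetry `Aₙ × Aₙ ≤ H`.
-/

open Subgroup

namespace Subgroup

variable {G : Type*} [Group G]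

theorem le_centralizer_of_le_normalizer_of_disjoint {K N : Subgroup G} [N.Normal]
    (hN : N ≤ normalizer K) (hKN : Disjoint K N) : K ≤ centralizer N := by
  intro k hk
  rw [mem_centralizer_iff]
  intro n hn
  have hcomm : k * n * k⁻¹ * n⁻¹ ∈ K ⊓ N := by
    refine mem_inf.mpr ⟨?_, ?_⟩
    · simpa only [mul_assoc] using mul_mem hk (le_normalizer_iff.mp hN n hn k⁻¹ (inv_mem hk))
    · exact mul_mem (‹N.Normal›.conj_mem n hn k) (inv_mem hn)
  rw [hKN.eq_bot, mem_bot, mul_inv_eq_one, mul_inv_eq_iff_eq_mul] at hcomm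
  exact hcomm.symm

variable {a b : G}

theorem swap_mem_closure_pair_swap {p : G × G}
    (hp : p ∈ closure ({(a, b), (b, a)} : Set (G × G))) :
    p.swap ∈ closure ({(a, b), (b, a)} : Set (G × G)) := by
  induction hp using closure_induction with
  | mem p hp =>
    rcases hp with rfl | rfl
    · exact subset_closure (Set.mem_insert_of_mem _ rfl)
    · exact subset_closure (Set.mem_insert _ _)
  | one => exact one_mem _
  | mul p q _ _ hp hq => exact mul_mem hp hq
  | inv p _ hp => exact inv_mem hp

theorem exists_mem_closure_pair_swap {g : G} (hg : g ∈ closure {a, b}) :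
    ∃ h, (h, g) ∈ closure ({(a, b), (b, a)} : Set (G × G)) := by
  induction hg using closure_induction with
  | mem g hg =>
    rcases hg with rfl | rfl
    · exact ⟨b, subset_closure (Set.mem_insert_of_mem _ rfl)⟩
    · exact ⟨a, subset_closure (Set.mem_insert _ _)⟩
  | one => exact ⟨1, one_mem _⟩
  | mul g g' _ _ hg hg' =>
    obtain ⟨h, hh⟩ := hg
    obtain ⟨h', hh'⟩ := hg'
    exact ⟨h * h', mul_mem hh hh'⟩
  | inv g _ hg =>
    obtain ⟨h, hh⟩ := hg
    exact ⟨h⁻¹, inv_mem hh⟩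

theorem closure_pair_le_normalizer_comap_inr :
    closure {a, b} ≤
      normalizer ((closure ({(a, b), (b, a)} : Set (G × G))).comap (MonoidHom.inr G G)) := by
  rw [le_normalizer_iff]
  intro g hg c hc
  obtain ⟨h, hh⟩ := exists_mem_closure_pair_swap hg
  simpa using mul_mem (mul_mem hh hc) (inv_mem hh)

theorem comap_inr_closure_pair_swap_ne_bot (hab : orderOf a ≠ orderOf b) :
    (closure ({(a, b), (b, a)} : Set (G × G))).comap (MonoidHom.inr G G) ≠ ⊥ := by
  intro hbot
  have pow_eq_one {x y : G} (hxy : (x, y) ∈ closure ({(a, b), (b, a)} : Set (G × G)))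
      {k : ℕ} (hx : x ^ k = 1) : y ^ k = 1 := by
    have hmem : (1, y ^ k) ∈ closure ({(a, b), (b, a)} : Set (G × G)) := by
      simpa [hx] using pow_mem hxy k
    simpa [hbot] using (show y ^ k ∈ (closure _).comap (MonoidHom.inr G G) from hmem)
  refine hab (orderOf_eq_orderOf_iff.mpr fun k => ⟨pow_eq_one ?_, pow_eq_one ?_⟩)
  · exact subset_closure (Set.mem_insert _ _)
  · exact subset_closure (Set.mem_insert_of_mem _ rfl)

theorem prod_le_closure_pair_swap {A : Subgroup G}
    (hA : A ≤ (closure ({(a, b), (b, a)} : Set (G × G))).comap (MonoidHom.inr G G)) :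
    A.prod A ≤ closure ({(a, b), (b, a)} : Set (G × G)) := by
  rintro ⟨x, y⟩ ⟨hx, hy⟩
  have hx1 : (x, 1) ∈ closure ({(a, b), (b, a)} : Set (G × G)) :=
    swap_mem_closure_pair_swap (hA hx)
  simpa using mul_mem hx1 (hA hy)

end Subgroup

namespace Equiv.Perm

variable {α : Type*} [Fintype α] [DecidableEq α]

theorem alternatingGroup_le_of_le_normalizer (hα : 5 ≤ Nat.card α) {K : Subgroup (Perm α)}
    (hK : alternatingGroup α ≤ normalizer K) (hK1 : K ≠ ⊥) : alternatingGroup α ≤ K := by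
  rcases (alternatingGroup.isSimpleGroup hα).eq_bot_or_eq_top_of_normal _
    (normal_subgroupOf_of_le_normalizer hK) with h | h
  · exfalso
    have hKC := le_centralizer_of_le_normalizer_of_disjoint hK (subgroupOf_eq_bot.mp h)
    have hAC : alternatingGroup α ≤ centralizer (alternatingGroup α) :=
      alternatingGroup_le_of_normal hα
        ((nontrivial_iff_ne_bot _).mpr fun hC => hK1 (eq_bot_iff.mpr (hC ▸ hKC)))
    have := alternatingGroup.isMulCommutative_iff_card_le_three.mp
      (le_centralizer_iff_isMulCommutative.mp hAC)
    omega
  · exact subgroupOf_eq_top.mp h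

end Equiv.Perm

/-- If `n ≥ 5`, `π₀, π₁ ∈ Sₙ` generate a subgroup containing `Aₙ`, and
`π₀, π₁` have distinct orders, then `⟨(π₀,π₁), (π₁,π₀)⟩ ≤ Sₙ × Sₙ`
contains `Aₙ × Aₙ`. -/
theorem closure_pairs_contains_An_prod_An (n : ℕ) (hn : 5 ≤ n)
    (π₀ π₁ : Equiv.Perm (Fin n))
    (hgen : alternatingGroup (Fin n) ≤ Subgroup.closure {π₀, π₁})
    (hord : orderOf π₀ ≠ orderOf π₁) :
    (alternatingGroup (Fin n)).prod (alternatingGroup (Fin n)) ≤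
      Subgroup.closure ({(π₀, π₁), (π₁, π₀)} :
        Set (Equiv.Perm (Fin n) × Equiv.Perm (Fin n))) :=
  prod_le_closure_pair_swap <|
    Equiv.Perm.alternatingGroup_le_of_le_normalizer (by simpa using hn)
      (hgen.trans closure_pair_le_normalizer_comap_inr) (comap_inr_closure_pair_swap_ne_bot hord)
end

section
/- Let n ≥ 5 and suppose π₀, π₁ ∈ Sₙ generate a subgroup containing Aₙ. Then the subgroup of Sₙ × Sₙ × Sₙ generated by (π₀, π₁, id), (id, π₀, π₁), and (π₁, id, π₀) contains Aₙ × Aₙ × Aₙ. -/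
/-!
Let `H` be the generated subgroup and `N = {x | (1, x, 1) ∈ H}`. Conjugating `(1, x, 1)` by
`t ∈ H` conjugates `x` by the middle coordinate of `t`, and these middle coordinates include `π₀`
and `π₁`; so `N` is normalized by `⟨π₀, π₁⟩ ⊇ Aₙ`. The commutator of `(1, π₀, π₁)` and
`(π₀, π₁, 1)` is `(1, ⁅π₀, π₁⁆, 1)`, and `⁅π₀, π₁⁆` is a nontrivial even permutation: were `π₀` and
`π₁` to commute, the perfect group `Aₙ` would lie in an abelian group. Simplicity of `Aₙ` now gives
`Aₙ ≤ N`, and the cyclic symmetry of `H` moves `Aₙ` into each coordinate.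
-/

open Subgroup
open scoped commutatorElement

section TripleClosure

variable {G : Type*} [Group G]

def cyclicTripleClosure (a b : G) : Subgroup (G × G × G) :=
  closure {(a, b, 1), (1, a, b), (b, 1, a)}

def middleSlice (H : Subgroup (G × G × G)) : Subgroup G :=
  H.comap ((MonoidHom.inr G (G × G)).comp (MonoidHom.inl G G))

theorem mem_middleSlice {H : Subgroup (G × G × G)} {x : G} :
    x ∈ middleSlice H ↔ ((1, x, 1) : G × G × G) ∈ H :=
  Iff.rfl

variable {a b : G}

theorem rotate_mem_cyclicTripleClosure {t : G × G × G} (ht : t ∈ cyclicTripleClosure a b) :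
    (t.2.1, t.2.2, t.1) ∈ cyclicTripleClosure a b := by
  induction ht using closure_induction with
  | mem t ht =>
    apply Subgroup.subset_closure
    rcases ht with rfl | rfl | rfl <;> simp
  | one => exact one_mem _
  | mul s t _ _ hs ht => exact mul_mem hs ht
  | inv t _ ht => exact inv_mem ht

theorem commutatorElement_mem_middleSlice : ⁅a, b⁆ ∈ middleSlice (cyclicTripleClosure a b) := by
  have hab : ((a, b, 1) : G × G × G) ∈ cyclicTripleClosure a b := Subgroup.subset_closure (by simp)
  have hab' : ((1, a, b) : G × G × G) ∈ cyclicTripleClosure a b := Subgroup.subset_closure (by simp)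
  simpa [mem_middleSlice, commutatorElement_def] using
    mul_mem (mul_mem (mul_mem hab' hab) (inv_mem hab')) (inv_mem hab)

theorem mem_normalizer_middleSlice {t : G × G × G} (ht : t ∈ cyclicTripleClosure a b) :
    t.2.1 ∈ normalizer (middleSlice (cyclicTripleClosure a b) : Set G) := by
  have conj : ∀ s ∈ cyclicTripleClosure a b, ∀ x ∈ middleSlice (cyclicTripleClosure a b),
      s.2.1 * x * s.2.1⁻¹ ∈ middleSlice (cyclicTripleClosure a b) := fun s hs x hx => by
    obtain ⟨s₁, s₂, s₃⟩ := s
    simpa [mem_middleSlice] using mul_mem (mul_mem hs hx) (inv_mem hs)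
  refine mem_normalizer_iff.mpr fun x => ⟨conj t ht x, fun hx => ?_⟩
  simpa [mul_assoc] using conj t⁻¹ (inv_mem ht) _ hx

theorem closure_pair_le_normalizer_middleSlice :
    closure {a, b} ≤ normalizer (middleSlice (cyclicTripleClosure a b) : Set G) := by
  rw [closure_le]
  rintro x (rfl | rfl)
  · exact mem_normalizer_middleSlice (t := (1, x, b)) (Subgroup.subset_closure (by simp))
  · exact mem_normalizer_middleSlice (t := (a, x, 1)) (Subgroup.subset_closure (by simp))

theorem prod_le_cyclicTripleClosure {K : Subgroup G}
    (hK : K ≤ middleSlice (cyclicTripleClosure a b)) :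
    K.prod (K.prod K) ≤ cyclicTripleClosure a b := by
  rintro ⟨x, y, z⟩ ⟨hx, hy, hz⟩
  have hx' := rotate_mem_cyclicTripleClosure (hK hx)
  have hz' := rotate_mem_cyclicTripleClosure (rotate_mem_cyclicTripleClosure (hK hz))
  simpa using mul_mem (mul_mem hx' (hK hy)) hz'

end TripleClosure

theorem not_commute_of_perfect_le_closure_pair {G : Type*} [Group G] {A : Subgroup G} {a b : G}
    (hperf : ⁅A, A⁆ = A) (hA : A ≠ ⊥) (hle : A ≤ closure {a, b}) : ¬Commute a b := by
  intro hab
  have : IsMulCommutative (closure {a, b}) := isMulCommutative_closure (by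
    rintro x (rfl | rfl) y (rfl | rfl) <;> first | rfl | exact hab | exact hab.symm)
  have hbot : ⁅closure {a, b}, closure {a, b}⁆ = ⊥ := commutator_self_eq_bot_iff.mpr this
  exact hA (eq_bot_iff.mpr (hperf ▸ hbot ▸ commutator_mono hle hle))

theorem le_of_le_normalizer_of_not_disjoint {G : Type*} [Group G] {A N : Subgroup G}
    [IsSimpleGroup A] (hA : A ≤ normalizer (N : Set G)) (hAN : ¬Disjoint N A) : A ≤ N := by
  have := normal_subgroupOf_of_le_normalizer hA
  rcases this.eq_bot_or_eq_top with h | h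
  · exact absurd (subgroupOf_eq_bot.mp h) hAN
  · exact subgroupOf_eq_top.mp h

/-- If `n ≥ 5` and `π₀, π₁ ∈ Sₙ` generate a subgroup containing `Aₙ`, then the
subgroup of `Sₙ × Sₙ × Sₙ` generated by `(π₀,π₁,1)`, `(1,π₀,π₁)` and `(π₁,1,π₀)`
contains `Aₙ × Aₙ × Aₙ`. -/
theorem closure_triples_contains_An_cubed (n : ℕ) (hn : 5 ≤ n)
    (π₀ π₁ : Equiv.Perm (Fin n))
    (hgen : alternatingGroup (Fin n) ≤ Subgroup.closure {π₀, π₁}) :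
    (alternatingGroup (Fin n)).prod
        ((alternatingGroup (Fin n)).prod (alternatingGroup (Fin n))) ≤
      Subgroup.closure ({(π₀, π₁, 1), (1, π₀, π₁), (π₁, 1, π₀)} :
        Set (Equiv.Perm (Fin n) × Equiv.Perm (Fin n) × Equiv.Perm (Fin n))) := by
  have h5 : 5 ≤ Nat.card (Fin n) := by simpa using hn
  have := alternatingGroup.isSimpleGroup h5
  have hcomm : ¬Commute π₀ π₁ := not_commute_of_perfect_le_closure_pair
    (commutator_alternatingGroup_eq_self h5) ((nontrivial_iff_ne_bot _).mp inferInstance) hgen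
  have hcA : ⁅π₀, π₁⁆ ∈ alternatingGroup (Fin n) :=
    alternatingGroup.commutator_perm_le (commutator_mem_commutator (mem_top _) (mem_top _))
  refine prod_le_cyclicTripleClosure (le_of_le_normalizer_of_not_disjoint
    (hgen.trans closure_pair_le_normalizer_middleSlice) fun hdisj => hcomm ?_)
  exact commutatorElement_eq_one_iff_commute.mp
    (disjoint_def.mp hdisj commutatorElement_mem_middleSlice hcA)
end

section
/- The polynomial F(z) = −(4/531441)·(z−1)·z³·(2z² + 3z + 9)³·(8z⁴ + 28z³ + 126z² + 189z + 378) satisfies: every critical value of F lies in {0,1}. -/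
/-!
`F` is a Shabat polynomial: `F - 1 = -G² / 3¹²` for an explicit septic `G`, and then
`F' = -(56 / 3¹²)·X²·(2X² + 3X + 9)²·G`. Every critical point is therefore a multiple root of
`F` or a root of `G`, where `F` takes the value `0` or `1` respectively.
-/

open Polynomial

theorem Polynomial.eval_mem_zero_one_of_derivative_dvd {R : Type*} [CommRing R] [NoZeroDivisors R]
    {F : R[X]} (hF : derivative F ∣ F * (F - 1)) {z : R} (hz : (derivative F).eval z = 0) :
    F.eval z ∈ ({0, 1} : Set R) := by
  obtain ⟨Q, hQ⟩ := hF
  have hcrit : F.eval z * (F.eval z - 1) = 0 := by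
    simpa [hz] using congrArg (eval z) hQ
  rcases mul_eq_zero.mp hcrit with h0 | h1
  · exact Or.inl h0
  · exact Or.inr (sub_eq_zero.mp h1)

namespace Shabat

noncomputable def F : ℂ[X] :=
  C (-(4 / 531441)) * (X - 1) * X ^ 3 * (C 2 * X ^ 2 + C 3 * X + C 9) ^ 3 *
    (C 8 * X ^ 4 + C 28 * X ^ 3 + C 126 * X ^ 2 + C 189 * X + C 378)

/-- Up to the factor `16`, this is `gcd(F - 1, F')`. -/
noncomputable def G : ℂ[X] :=
  16 * X ^ 7 + 56 * X ^ 6 + 252 * X ^ 5 + 378 * X ^ 4 + 756 * X ^ 3 - 729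

theorem F_sub_one : F - 1 = C (-(1 / 531441)) * G ^ 2 := by
  refine Polynomial.funext fun z => ?_
  simp [F, G]
  ring

theorem derivative_F :
    derivative F = C (-(56 / 531441)) * (X ^ 2 * (C 2 * X ^ 2 + C 3 * X + C 9) ^ 2) * G := by
  refine Polynomial.funext fun z => ?_
  simp [F, G, derivative_mul, derivative_pow]
  ring

theorem derivative_F_dvd : derivative F ∣ F * (F - 1) := by
  have hF : X ^ 2 * (C 2 * X ^ 2 + C 3 * X + C 9) ^ 2 ∣ F :=
    ⟨C (-(4 / 531441)) * (X - 1) * X * (C 2 * X ^ 2 + C 3 * X + C 9) *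
      (C 8 * X ^ 4 + C 28 * X ^ 3 + C 126 * X ^ 2 + C 189 * X + C 378), by rw [F]; ring⟩
  have hF1 : G ∣ F - 1 := ⟨C (-(1 / 531441)) * G, by rw [F_sub_one]; ring⟩
  rw [derivative_F, mul_assoc]
  exact (isUnit_C.mpr (by norm_num)).mul_left_dvd.mpr (mul_dvd_mul hF hF1)

end Shabat

/-- The polynomial
`F(z) = -(4/531441)·(z-1)·z³·(2z²+3z+9)³·(8z⁴+28z³+126z²+189z+378)`
has every critical value in `{0,1}`. -/
theorem shabat_sporadic :
    ∀ z : ℂ,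
      ((C (-(4 / 531441)) * (X - 1) * X ^ 3 * (C 2 * X ^ 2 + C 3 * X + C 9) ^ 3 *
          (C 8 * X ^ 4 + C 28 * X ^ 3 + C 126 * X ^ 2 + C 189 * X + C 378) :
        Polynomial ℂ)).derivative.eval z = 0 →
      ((C (-(4 / 531441)) * (X - 1) * X ^ 3 * (C 2 * X ^ 2 + C 3 * X + C 9) ^ 3 *
          (C 8 * X ^ 4 + C 28 * X ^ 3 + C 126 * X ^ 2 + C 189 * X + C 378) :
        Polynomial ℂ)).eval z ∈ ({0, 1} : Set ℂ) :=
  fun _ => eval_mem_zero_one_of_derivative_dvd Shabat.derivative_F_dvd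
end

section
/- The polynomial f(z) = −(1/729)·(z − 1)·(9 + 3z + 2z²)³ has all its critical values contained in {0,1}, and f(0) = 1 and f(1) = 0, hence β ∘ f with β(z) = 4z(1−z) also has all critical values in {0,1}. -/
open Polynomial

/-!
The derivative of `f` factors as `-(14/729) z² (9 + 3z + 2z²)²`, so the critical points of `f`
are `0`, where `f = 1`, and the roots of `9 + 3z + 2z²`, where `f = 0`. By the chain rule a
critical value of `β ∘ f` is either `β` of a critical value of `f`, hence `β 0 = β 1 = 0`, or a
critical value of `β`, which is `β (1/2) = 1`.
-/

def criticalValues {R : Type*} [CommRing R] (p : R[X]) : Set R :=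
  p.eval '' {z | p.derivative.eval z = 0}

theorem criticalValues_subset_iff {R : Type*} [CommRing R] {p : R[X]} {s : Set R} :
    criticalValues p ⊆ s ↔ ∀ z, p.derivative.eval z = 0 → p.eval z ∈ s :=
  Set.image_subset_iff

theorem criticalValues_comp_subset {R : Type*} [CommRing R] [NoZeroDivisors R] (p q : R[X]) :
    criticalValues (p.comp q) ⊆ p.eval '' criticalValues q ∪ criticalValues p := by
  rintro _ ⟨z, hz, rfl⟩
  rw [Set.mem_ofPred_eq, derivative_comp, eval_mul, eval_comp, mul_eq_zero] at hz
  change (p.comp q).eval z ∈ _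
  rw [eval_comp]
  rcases hz with hq | hp
  · exact Or.inl ⟨q.eval z, ⟨z, hq, rfl⟩, rfl⟩
  · exact Or.inr ⟨q.eval z, hp, rfl⟩

section Beta

variable {K : Type*} [Field K]

noncomputable def betaPoly : K[X] := C 4 * X * (1 - X)

theorem eval_betaPoly (w : K) : betaPoly.eval w = 4 * w * (1 - w) := by
  simp [betaPoly]

theorem eval_derivative_betaPoly (w : K) : (betaPoly : K[X]).derivative.eval w = 4 - 8 * w := by
  simp only [betaPoly, derivative_mul, derivative_sub, derivative_C, derivative_X,
    derivative_one, eval_add, eval_mul, eval_sub, eval_C, eval_X, eval_one, eval_zero]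
  ring

theorem criticalValues_betaPoly_subset [NeZero (2 : K)] :
    criticalValues (betaPoly : K[X]) ⊆ {1} := by
  refine criticalValues_subset_iff.2 fun w hw => ?_
  rw [eval_derivative_betaPoly] at hw
  have hw' : 2 * w = 1 :=
    mul_left_cancel₀ (pow_ne_zero 2 (NeZero.ne (2 : K))) (by linear_combination -hw)
  rw [eval_betaPoly, Set.mem_singleton_iff]
  linear_combination (1 - 2 * w) * hw'

theorem betaPoly_image_zero_one : (betaPoly : K[X]).eval '' {0, 1} ⊆ {0, 1} := by
  rintro _ ⟨w, hw | hw, rfl⟩ <;> simp_all [eval_betaPoly]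

end Beta

section Shabat

noncomputable def shabatPoly : ℂ[X] :=
  C (-(1 / 729)) * (X - 1) * (C 9 + C 3 * X + C 2 * X ^ 2) ^ 3

theorem eval_shabatPoly (z : ℂ) :
    shabatPoly.eval z = -(1 / 729) * (z - 1) * (9 + 3 * z + 2 * z ^ 2) ^ 3 := by
  simp [shabatPoly]

theorem eval_derivative_shabatPoly (z : ℂ) :
    shabatPoly.derivative.eval z = -(14 / 729) * z ^ 2 * (9 + 3 * z + 2 * z ^ 2) ^ 2 := by
  simp only [shabatPoly, derivative_mul, derivative_pow, derivative_add, derivative_sub,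
    derivative_C, derivative_X, derivative_one, eval_add, eval_mul, eval_sub, eval_pow,
    eval_C, eval_X, eval_one, eval_zero]
  push_cast
  ring

theorem criticalValues_shabatPoly_subset : criticalValues shabatPoly ⊆ {0, 1} := by
  refine criticalValues_subset_iff.2 fun z hz => ?_
  rw [eval_derivative_shabatPoly] at hz
  rw [eval_shabatPoly]
  rcases mul_eq_zero.1 hz with hz | hq
  · have hz0 : z = 0 := by simpa using hz
    right
    rw [hz0]
    norm_num
  · have hq0 : (9 + 3 * z + 2 * z ^ 2 : ℂ) = 0 := pow_eq_zero_iff two_ne_zero |>.1 hq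
    left
    rw [hq0]
    ring

end Shabat

/-- The polynomial `f(z) = -(1/729)·(z-1)·(9+3z+2z²)³` has all critical values
in `{0,1}`, satisfies `f(0) = 1` and `f(1) = 0`, hence `β ∘ f` with
`β(z) = 4z(1-z)` also has all critical values in `{0,1}`. -/
theorem shabat_f_and_comp :
    (∀ z : ℂ,
      ((C (-(1 / 729)) * (X - 1) * (C 9 + C 3 * X + C 2 * X ^ 2) ^ 3 :
        Polynomial ℂ)).derivative.eval z = 0 →
      ((C (-(1 / 729)) * (X - 1) * (C 9 + C 3 * X + C 2 * X ^ 2) ^ 3 :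
        Polynomial ℂ)).eval z ∈ ({0, 1} : Set ℂ)) ∧
    ((C (-(1 / 729)) * (X - 1) * (C 9 + C 3 * X + C 2 * X ^ 2) ^ 3 :
        Polynomial ℂ)).eval 0 = 1 ∧
    ((C (-(1 / 729)) * (X - 1) * (C 9 + C 3 * X + C 2 * X ^ 2) ^ 3 :
        Polynomial ℂ)).eval 1 = 0 ∧
    (∀ z : ℂ,
      (((C 4 * X * (1 - X) : Polynomial ℂ)).comp
          (C (-(1 / 729)) * (X - 1) * (C 9 + C 3 * X + C 2 * X ^ 2) ^ 3)).derivative.eval z = 0 →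
      (((C 4 * X * (1 - X) : Polynomial ℂ)).comp
          (C (-(1 / 729)) * (X - 1) * (C 9 + C 3 * X + C 2 * X ^ 2) ^ 3)).eval z ∈
        ({0, 1} : Set ℂ)) := by
  have hcomp : criticalValues (betaPoly.comp shabatPoly) ⊆ {0, 1} :=
    (criticalValues_comp_subset _ _).trans <| Set.union_subset
      ((Set.image_mono criticalValues_shabatPoly_subset).trans betaPoly_image_zero_one)
      (criticalValues_betaPoly_subset.trans (by simp))
  refine ⟨criticalValues_subset_iff.1 criticalValues_shabatPoly_subset, ?_, ?_,
    criticalValues_subset_iff.1 hcomp⟩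
  · rw [← shabatPoly, eval_shabatPoly]; norm_num
  · rw [← shabatPoly, eval_shabatPoly]; norm_num
end
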